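/- arXiv:1001.4334 — 3 statements merged into one kernel-verified Lean document; each statement's English description precedes it below -/
import Mathlib

section
/- Let S(n) denote the set of binary sequences x ∈ {0,1}^n with x_1 = 1 in which consecutive ones are separated by at least d and at most k zeros and the trailing run of zeros has length at most r (a dkr-sequence), and for σ ∈ ℤ let A(n, σ) be those with NRZI charge σ. Then for n ≥ d+1, each x ∈ A(n, σ) decomposes uniquely as a block (1, 0^{j-1}) with d+1 ≤ j ≤ min(n, k+1) followed by an element of A(n-j, -σ-j), except that when n ≤ r+1 the all-block sequence (1, 0^{n-1}) (charge -n) is counted separately; consequently |A(n,σ)| satisfies the Cover recurrence |A(n,σ)| = [n ≤ r+1 ∧ σ = -n] + ∑_{j=d+1}^{min(n-1, k+1)} |A(n-j, -σ-j)|. -/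
open Finset

/-- `x : Fin n → Fin 2` is a dkr-sequence: it starts with `1`, any two consecutive ones
are separated by at least `d` and at most `k` zeros, and the trailing run of zeros has
length at most `r`. -/
def IsDKR (d k r n : ℕ) (x : Fin n → Fin 2) : Prop :=
  (∀ h : 0 < n, x ⟨0, h⟩ = 1) ∧
  (∀ i j : Fin n, i < j → x i = 1 → x j = 1 →
      (∀ t : Fin n, i < t → t < j → x t = 0) →
      d ≤ (j : ℕ) - (i : ℕ) - 1 ∧ (j : ℕ) - (i : ℕ) - 1 ≤ k) ∧
  (∀ i : Fin n, x i = 1 → (∀ t : Fin n, i < t → x t = 0) → n - 1 - (i : ℕ) ≤ r)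

/-- NRZI charge of a binary sequence: `∑_j (-1)^{x_1 + ⋯ + x_j}`. -/
def nrziCharge (n : ℕ) (x : Fin n → Fin 2) : ℤ :=
  ∑ j : Fin n, (-1 : ℤ) ^ (∑ i ∈ Finset.univ.filter (· ≤ j), (x i : ℕ))

/-- The number of dkr-sequences of length `n` with NRZI charge `σ`. -/
noncomputable def Acard (d k r n : ℕ) (σ : ℤ) : ℕ :=
  Nat.card {x : Fin n → Fin 2 // IsDKR d k r n x ∧ nrziCharge n x = σ}

lemma fin2_cases (a : Fin 2) : a = 0 ∨ a = 1 := by omega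

def psum (n : ℕ) (x : Fin n → Fin 2) (t : Fin n) : ℕ :=
  ∑ i ∈ Finset.univ.filter (· ≤ t), (x i : ℕ)

lemma nrziCharge_eq (n : ℕ) (x : Fin n → Fin 2) :
    nrziCharge n x = ∑ t : Fin n, (-1 : ℤ) ^ (psum n x t) := rfl

def tl (n j : ℕ) (x : Fin n → Fin 2) (i : Fin (n - j)) : Fin 2 :=
  x ⟨j + i, by omega⟩

def consBlock (n j : ℕ) (y : Fin (n - j) → Fin 2) : Fin n → Fin 2 :=
  fun t => if h : (t : ℕ) < j then (if (t : ℕ) = 0 then 1 else 0)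
           else y ⟨(t : ℕ) - j, by have := t.isLt; omega⟩

section psumlemmas

variable {n j : ℕ} {x : Fin n → Fin 2}

lemma psum_lt (hj1 : 1 ≤ j) (h0 : ∀ h : 0 < n, x ⟨0, h⟩ = 1)
    (hz : ∀ i : Fin n, 0 < (i : ℕ) → (i : ℕ) < j → x i = 0)
    (t : Fin n) (ht : (t : ℕ) < j) : psum n x t = 1 := by
  have hn : 0 < n := t.pos
  rw [psum]
  rw [Finset.sum_eq_single_of_mem (⟨0, hn⟩ : Fin n)]
  · rw [h0 hn]; rfl
  · simp only [Finset.mem_filter, Finset.mem_univ, true_and]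
    exact Fin.le_def.mpr (Nat.zero_le _)
  · intro b hb hb0
    simp only [Finset.mem_filter, Finset.mem_univ, true_and] at hb
    have hbpos : 0 < (b : ℕ) := by
      rcases Nat.eq_zero_or_pos (b : ℕ) with h | h
      · exact absurd (Fin.ext h) hb0
      · exact h
    have : x b = 0 := hz b hbpos (lt_of_le_of_lt (Fin.le_def.mp hb) ht)
    simp [this]

lemma psum_ge (hj1 : 1 ≤ j) (h0 : ∀ h : 0 < n, x ⟨0, h⟩ = 1)
    (hz : ∀ i : Fin n, 0 < (i : ℕ) → (i : ℕ) < j → x i = 0)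
    (t : Fin n) (ht : j ≤ (t : ℕ)) :
    psum n x t = 1 + psum (n - j) (tl n j x) ⟨(t : ℕ) - j, by have := t.isLt; omega⟩ := by
  have hn : 0 < n := t.pos
  rw [psum]
  rw [← Finset.sum_filter_add_sum_filter_not (Finset.univ.filter (· ≤ t))
      (fun i : Fin n => (i : ℕ) < j)]
  congr 1
  · -- first block sums to 1
    rw [Finset.sum_eq_single_of_mem (⟨0, hn⟩ : Fin n)]
    · rw [h0 hn]; rfl
    · simp only [Finset.mem_filter, Finset.mem_univ, true_and]
      exact ⟨Fin.le_def.mpr (Nat.zero_le _), by omega⟩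
    · intro b hb hb0
      simp only [Finset.mem_filter, Finset.mem_univ, true_and] at hb
      have hbpos : 0 < (b : ℕ) := by
        rcases Nat.eq_zero_or_pos (b : ℕ) with h | h
        · exact absurd (Fin.ext h) hb0
        · exact h
      have : x b = 0 := hz b hbpos hb.2
      simp [this]
  · rw [psum]
    refine Finset.sum_bij' (fun a ha => (⟨(a : ℕ) - j, by have := a.isLt; omega⟩ : Fin (n - j)))
      (fun b hb => (⟨j + (b : ℕ), by have := b.isLt; omega⟩ : Fin n)) ?_ ?_ ?_ ?_ ?_
    · intro a ha
      simp only [Finset.mem_filter, Finset.mem_univ, true_and, not_lt] at ha ⊢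
      simp only [Fin.le_def] at ha ⊢
      omega
    · intro b hb
      simp only [Finset.mem_filter, Finset.mem_univ, true_and, not_lt] at hb ⊢
      simp only [Fin.le_def] at hb ⊢
      omega
    · intro a ha
      simp only [Finset.mem_filter, Finset.mem_univ, true_and, not_lt] at ha
      exact Fin.ext (by simp; omega)
    · intro b hb
      exact Fin.ext (by simp)
    · intro a ha
      simp only [Finset.mem_filter, Finset.mem_univ, true_and, not_lt] at ha
      have e : a = (⟨j + ((a : ℕ) - j), by have := a.isLt; omega⟩ : Fin n) :=
        Fin.ext (by simp; omega)
      conv_lhs => rw [e]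
      rfl

lemma card_filter_val_lt (hj : j ≤ n) (hj1 : 1 ≤ j) :
    (Finset.univ.filter (fun t : Fin n => (t : ℕ) < j)).card = j := by
  rcases eq_or_lt_of_le hj with h | h
  · subst h
    rw [Finset.filter_true_of_mem (fun t _ => t.isLt)]
    simp
  · have : (Finset.univ.filter (fun t : Fin n => (t : ℕ) < j))
        = Finset.Iio (⟨j, h⟩ : Fin n) := by
      ext t
      simp [Finset.mem_Iio, Fin.lt_def]
    rw [this, Fin.card_Iio]

lemma charge_all_lt (hj1 : 1 ≤ j) (hj : n ≤ j) (h0 : ∀ h : 0 < n, x ⟨0, h⟩ = 1)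
    (hz : ∀ i : Fin n, 0 < (i : ℕ) → (i : ℕ) < j → x i = 0) :
    nrziCharge n x = -(n : ℤ) := by
  rw [nrziCharge_eq]
  have hc : ∀ t ∈ (Finset.univ : Finset (Fin n)), (-1 : ℤ) ^ (psum n x t) = -1 := by
    intro t _
    rw [psum_lt hj1 h0 hz t (lt_of_lt_of_le t.isLt hj)]
    ring
  rw [Finset.sum_congr rfl hc]
  simp

lemma charge_split (hj1 : 1 ≤ j) (hj : j < n) (h0 : ∀ h : 0 < n, x ⟨0, h⟩ = 1)
    (hz : ∀ i : Fin n, 0 < (i : ℕ) → (i : ℕ) < j → x i = 0) :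
    nrziCharge n x = -(j : ℤ) - nrziCharge (n - j) (tl n j x) := by
  rw [nrziCharge_eq, nrziCharge_eq]
  rw [← Finset.sum_filter_add_sum_filter_not (Finset.univ : Finset (Fin n))
      (fun t : Fin n => (t : ℕ) < j)]
  have h1 : ∑ t ∈ Finset.univ.filter (fun t : Fin n => (t : ℕ) < j),
      (-1 : ℤ) ^ (psum n x t) = -(j : ℤ) := by
    have hc : ∀ t ∈ Finset.univ.filter (fun t : Fin n => (t : ℕ) < j),
        (-1 : ℤ) ^ (psum n x t) = -1 := by
      intro t ht
      rw [psum_lt hj1 h0 hz t (by simpa using ht)]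
      ring
    rw [Finset.sum_congr rfl hc]
    simp [card_filter_val_lt (le_of_lt hj) hj1]
  have h2 : ∑ t ∈ Finset.univ.filter (fun t : Fin n => ¬ (t : ℕ) < j),
      (-1 : ℤ) ^ (psum n x t)
      = ∑ b : Fin (n - j), -((-1 : ℤ) ^ (psum (n - j) (tl n j x) b)) := by
    refine Finset.sum_bij' (fun a ha => (⟨(a : ℕ) - j, by have := a.isLt; omega⟩ : Fin (n - j)))
      (fun b hb => (⟨j + (b : ℕ), by have := b.isLt; omega⟩ : Fin n)) ?_ ?_ ?_ ?_ ?_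
    · intro a ha; exact Finset.mem_univ _
    · intro b hb
      simp only [Finset.mem_filter, Finset.mem_univ, true_and, not_lt]
      simp
    · intro a ha
      simp only [Finset.mem_filter, Finset.mem_univ, true_and, not_lt] at ha
      exact Fin.ext (by simp; omega)
    · intro b hb
      exact Fin.ext (by simp)
    · intro a ha
      simp only [Finset.mem_filter, Finset.mem_univ, true_and, not_lt] at ha
      rw [psum_ge hj1 h0 hz a ha]
      have hp : ∀ p : ℕ, (-1 : ℤ) ^ (1 + p) = -((-1) ^ p) := by
        intro p; rw [pow_add, pow_one]; ring
      rw [hp]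
  rw [h1, h2, Finset.sum_neg_distrib]
  ring

end psumlemmas

section dkrlemmas

variable {d k r n j : ℕ} {x : Fin n → Fin 2}

lemma fin2_ne (h : (0 : Fin 2) = 1) : False := by simp at h

lemma dkr_block (hn : 0 < n) :
    IsDKR d k r n (fun t : Fin n => if (t : ℕ) = 0 then 1 else 0) ↔ n ≤ r + 1 := by
  constructor
  · rintro ⟨-, -, h3⟩
    have h := h3 ⟨0, hn⟩ (by simp) (fun t ht => by
      have : 0 < (t : ℕ) := ht
      simp only [if_neg (by omega : ¬ (t : ℕ) = 0)])
    simp only [Fin.val_mk] at h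
    omega
  · intro hr
    refine ⟨fun h => by simp, ?_, ?_⟩
    · intro i jj hij hxi hxjj _
      exfalso
      have hp : 0 < (jj : ℕ) := lt_of_le_of_lt (Nat.zero_le _) hij
      simp only [if_neg (by omega : ¬ (jj : ℕ) = 0)] at hxjj
      exact fin2_ne hxjj
    · intro i hxi _
      have : (i : ℕ) = 0 := by
        by_contra hne
        simp only [if_neg hne] at hxi
        exact fin2_ne hxi
      omega

lemma dkr_split (hj1 : 1 ≤ j) (hjlt : j < n)
    (h0 : ∀ h : 0 < n, x ⟨0, h⟩ = 1)
    (hz : ∀ i : Fin n, 0 < (i : ℕ) → (i : ℕ) < j → x i = 0)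
    (hxj : x ⟨j, hjlt⟩ = 1) :
    IsDKR d k r n x ↔ (d + 1 ≤ j ∧ j ≤ k + 1 ∧ IsDKR d k r (n - j) (tl n j x)) := by
  have hn : 0 < n := by omega
  constructor
  · rintro ⟨hA, hB, hC⟩
    have hpair := hB ⟨0, hn⟩ ⟨j, hjlt⟩ (Fin.mk_lt_mk.mpr (by omega)) (h0 hn) hxj
      (fun t h1 h2 => hz t (by simpa [Fin.lt_def] using h1) (by simpa [Fin.lt_def] using h2))
    simp only [Fin.val_mk] at hpair
    refine ⟨by omega, by omega, ?_, ?_, ?_⟩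
    · intro h
      exact hxj
    · intro i' j' hlt h1 h2 hgap
      have hlt' : (i' : ℕ) < (j' : ℕ) := hlt
      have hj'lt := j'.isLt
      have key := hB ⟨j + (i' : ℕ), by omega⟩ ⟨j + (j' : ℕ), by omega⟩
        (Fin.mk_lt_mk.mpr (by omega)) h1 h2 ?_
      · simp only [Fin.val_mk] at key
        omega
      · intro t ht1 ht2
        simp only [Fin.lt_def, Fin.val_mk] at ht1 ht2
        have htlt := t.isLt
        have e : t = (⟨j + ((t : ℕ) - j), by omega⟩ : Fin n) := Fin.ext (by simp; omega)
        rw [e]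
        exact hgap ⟨(t : ℕ) - j, by omega⟩
          (by simp only [Fin.lt_def, Fin.val_mk]; omega)
          (by simp only [Fin.lt_def, Fin.val_mk]; omega)
    · intro i' h1 h2
      have hi'lt := i'.isLt
      have key := hC ⟨j + (i' : ℕ), by omega⟩ h1 ?_
      · simp only [Fin.val_mk] at key
        omega
      · intro t ht
        simp only [Fin.lt_def, Fin.val_mk] at ht
        have htlt := t.isLt
        have e : t = (⟨j + ((t : ℕ) - j), by omega⟩ : Fin n) := Fin.ext (by simp; omega)
        rw [e]
        exact h2 ⟨(t : ℕ) - j, by omega⟩ (by simp only [Fin.lt_def, Fin.val_mk]; omega)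
  · rintro ⟨hd, hk, hA, hB, hC⟩
    refine ⟨h0, ?_, ?_⟩
    · intro i jj hij hxi hxjj hgap
      have hij' : (i : ℕ) < (jj : ℕ) := hij
      have hjjlt := jj.isLt
      by_cases hi : (i : ℕ) < j
      · have hi0 : (i : ℕ) = 0 := by
          by_contra hne
          rw [hz i (by omega) hi] at hxi
          exact fin2_ne hxi
        by_cases hjj2 : (jj : ℕ) < j
        · exfalso
          have : (jj : ℕ) = 0 := by
            by_contra hne
            rw [hz jj (by omega) hjj2] at hxjj
            exact fin2_ne hxjj
          omega
        · have hjj : (jj : ℕ) = j := by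
            by_contra hne
            have : x ⟨j, hjlt⟩ = 0 := hgap ⟨j, hjlt⟩
              (Fin.lt_def.mpr (by simp; omega)) (Fin.lt_def.mpr (by simp; omega))
            rw [this] at hxj
            exact fin2_ne hxj
          omega
      · have hjj2 : ¬ (jj : ℕ) < j := by omega
        have ei : i = (⟨j + ((i : ℕ) - j), by omega⟩ : Fin n) := Fin.ext (by simp; omega)
        have ejj : jj = (⟨j + ((jj : ℕ) - j), by omega⟩ : Fin n) := Fin.ext (by simp; omega)
        rw [ei] at hxi
        rw [ejj] at hxjj
        have key := hB ⟨(i : ℕ) - j, by omega⟩ ⟨(jj : ℕ) - j, by omega⟩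
          (Fin.mk_lt_mk.mpr (by omega)) hxi hxjj ?_
        · simp only [Fin.val_mk] at key
          omega
        · intro t' ht1 ht2
          simp only [Fin.lt_def, Fin.val_mk] at ht1 ht2
          have ht'lt := t'.isLt
          exact hgap ⟨j + (t' : ℕ), by omega⟩
            (Fin.lt_def.mpr (by simp; omega)) (Fin.lt_def.mpr (by simp; omega))
    · intro i hxi hafter
      by_cases hi : (i : ℕ) < j
      · exfalso
        have : x ⟨j, hjlt⟩ = 0 := hafter ⟨j, hjlt⟩ (Fin.lt_def.mpr (by simp; omega))
        rw [this] at hxj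
        exact fin2_ne hxj
      · have hilt := i.isLt
        have ei : i = (⟨j + ((i : ℕ) - j), by omega⟩ : Fin n) := Fin.ext (by simp; omega)
        rw [ei] at hxi
        have key := hC ⟨(i : ℕ) - j, by omega⟩ hxi ?_
        · simp only [Fin.val_mk] at key
          omega
        · intro t' ht
          simp only [Fin.lt_def, Fin.val_mk] at ht
          have ht'lt := t'.isLt
          exact hafter ⟨j + (t' : ℕ), by omega⟩ (Fin.lt_def.mpr (by simp; omega))

end dkrlemmas

section secondone

def secondOne (n : ℕ) (x : Fin n → Fin 2) : ℕ :=
  if h : (Finset.univ.filter (fun t : Fin n => 0 < (t : ℕ) ∧ x t = 1)).Nonempty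
  then (((Finset.univ.filter (fun t : Fin n => 0 < (t : ℕ) ∧ x t = 1)).min' h : Fin n) : ℕ)
  else n

variable {n : ℕ} {x : Fin n → Fin 2}

lemma secondOne_cases : secondOne n x = n ∨ secondOne n x < n := by
  rw [secondOne]
  split
  · right; exact Fin.isLt _
  · left; rfl

lemma secondOne_spec {j : ℕ} (h : secondOne n x = j) (hj : j < n) :
    0 < j ∧ x ⟨j, hj⟩ = 1 ∧ ∀ t : Fin n, 0 < (t : ℕ) → (t : ℕ) < j → x t = 0 := by
  rw [secondOne] at h
  split at h
  case isFalse => omega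
  case isTrue hne =>
    set s := Finset.univ.filter (fun t : Fin n => 0 < (t : ℕ) ∧ x t = 1) with hs
    have hmem : s.min' hne ∈ s := Finset.min'_mem s hne
    simp only [hs, Finset.mem_filter, Finset.mem_univ, true_and] at hmem
    have hval : s.min' hne = (⟨j, hj⟩ : Fin n) := Fin.ext h
    rw [hval] at hmem
    refine ⟨hmem.1, hmem.2, ?_⟩
    intro t ht1 ht2
    by_contra hne0
    have hx1 : x t = 1 := by
      rcases fin2_cases (x t) with h' | h'
      · exact absurd h' hne0
      · exact h'
    have : s.min' hne ≤ t := Finset.min'_le s t (by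
      simp only [hs, Finset.mem_filter, Finset.mem_univ, true_and]
      exact ⟨ht1, hx1⟩)
    rw [hval] at this
    have := Fin.le_def.mp this
    simp only [Fin.val_mk] at this
    omega

lemma secondOne_eq_self (h : secondOne n x = n) :
    ∀ t : Fin n, 0 < (t : ℕ) → x t = 0 := by
  rw [secondOne] at h
  split at h
  case isTrue hne =>
    exfalso
    have := Fin.isLt ((Finset.univ.filter (fun t : Fin n => 0 < (t : ℕ) ∧ x t = 1)).min' hne)
    omega
  case isFalse hne =>
    intro t ht
    rcases fin2_cases (x t) with h' | h'
    · exact h'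
    · exfalso
      exact hne ⟨t, by simp only [Finset.mem_filter, Finset.mem_univ, true_and]; exact ⟨ht, h'⟩⟩

lemma secondOne_eq {j : ℕ} (hjlt : j < n) (hj1 : 0 < j)
    (hxj : x ⟨j, hjlt⟩ = 1)
    (hz : ∀ t : Fin n, 0 < (t : ℕ) → (t : ℕ) < j → x t = 0) :
    secondOne n x = j := by
  have hmem : (⟨j, hjlt⟩ : Fin n) ∈
      Finset.univ.filter (fun t : Fin n => 0 < (t : ℕ) ∧ x t = 1) := by
    simp only [Finset.mem_filter, Finset.mem_univ, true_and]
    exact ⟨hj1, hxj⟩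
  have hne : (Finset.univ.filter (fun t : Fin n => 0 < (t : ℕ) ∧ x t = 1)).Nonempty :=
    ⟨_, hmem⟩
  rw [secondOne, dif_pos hne]
  set s := Finset.univ.filter (fun t : Fin n => 0 < (t : ℕ) ∧ x t = 1) with hs
  have h1 : s.min' hne ≤ ⟨j, hjlt⟩ := Finset.min'_le s _ hmem
  have hmem2 := Finset.min'_mem s hne
  simp only [hs, Finset.mem_filter, Finset.mem_univ, true_and] at hmem2
  have h2 : j ≤ ((s.min' hne : Fin n) : ℕ) := by
    by_contra hlt
    have := hz (s.min' hne) hmem2.1 (by omega)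
    rw [this] at hmem2
    exact fin2_ne hmem2.2
  have := Fin.le_def.mp h1
  simp only [Fin.val_mk] at this
  have hgoal : ((s.min' hne : Fin n) : ℕ) = j := by omega
  exact hgoal

end secondone

section mainproof

variable {n j : ℕ}

lemma consBlock_zero (hj : 0 < j) (h : 0 < n) (y : Fin (n - j) → Fin 2) :
    consBlock n j y ⟨0, h⟩ = 1 := by
  rw [consBlock, dif_pos (by simpa using hj), if_pos rfl]

lemma consBlock_lt (y : Fin (n - j) → Fin 2) (t : Fin n) (h1 : 0 < (t : ℕ))
    (h2 : (t : ℕ) < j) : consBlock n j y t = 0 := by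
  rw [consBlock, dif_pos h2, if_neg (by omega)]

lemma tl_consBlock (y : Fin (n - j) → Fin 2) : tl n j (consBlock n j y) = y := by
  funext i
  rw [tl, consBlock, dif_neg (by simp)]
  congr 1
  exact Fin.ext (by simp)

noncomputable def Aset (d k r m : ℕ) (τ : ℤ) : Finset (Fin m → Fin 2) :=
  @Finset.filter _ (fun x => IsDKR d k r m x ∧ nrziCharge m x = τ) (Classical.decPred _)
    Finset.univ

lemma mem_Aset {d k r m : ℕ} {τ : ℤ} {x : Fin m → Fin 2} :
    x ∈ Aset d k r m τ ↔ IsDKR d k r m x ∧ nrziCharge m x = τ := by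
  classical
  rw [Aset]
  simp [Finset.mem_filter]

lemma Acard_eq (d k r m : ℕ) (τ : ℤ) : Acard d k r m τ = (Aset d k r m τ).card := by
  classical
  rw [Acard, Nat.card_eq_fintype_card, Fintype.card_subtype]
  congr 1
  ext x
  simp [mem_Aset]

/-- The Cover recurrence for the number of dkr-sequences with given charge. -/
theorem Acard_cover_recurrence (d k r : ℕ) (hdk : d ≤ k) (n : ℕ) (σ : ℤ)
    (hn : d + 1 ≤ n) :
    Acard d k r n σ
      = (if n ≤ r + 1 ∧ σ = -(n : ℤ) then 1 else 0)
        + ∑ j ∈ Finset.Icc (d + 1) (min (n - 1) (k + 1)),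
            Acard d k r (n - j) (-σ - (j : ℤ)) := by
  classical
  have hn0 : 0 < n := by omega
  rw [Acard_eq]
  have hmem : ∀ x ∈ Aset d k r n σ,
      secondOne n x ∈ insert n (Finset.Icc (d + 1) (min (n - 1) (k + 1))) := by
    intro x hx
    rw [mem_Aset] at hx
    rcases secondOne_cases (x := x) with h | h
    · rw [h]; exact Finset.mem_insert_self _ _
    · obtain ⟨hpos, hx1, hzz⟩ := secondOne_spec rfl h
      have hd := (dkr_split hpos h hx.1.1 hzz hx1).mp hx.1
      refine Finset.mem_insert_of_mem ?_
      simp only [Finset.mem_Icc, le_min_iff]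
      omega
  rw [Finset.card_eq_sum_card_fiberwise hmem]
  rw [Finset.sum_insert (by simp only [Finset.mem_Icc, le_min_iff]; omega)]
  congr 1
  · -- fiber at n : the all-block sequence
    by_cases hcond : n ≤ r + 1 ∧ σ = -(n : ℤ)
    · rw [if_pos hcond]
      have hset : (Aset d k r n σ).filter (fun x => secondOne n x = n)
          = {fun t : Fin n => if (t : ℕ) = 0 then 1 else 0} := by
        ext x
        simp only [Finset.mem_filter, Finset.mem_singleton, mem_Aset]
        constructor
        · rintro ⟨⟨hdkr, hch⟩, hso⟩
          have hz := secondOne_eq_self hso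
          funext t
          by_cases h0 : (t : ℕ) = 0
          · have ht : t = ⟨0, hn0⟩ := Fin.ext h0
            rw [ht, hdkr.1 hn0, if_pos rfl]
          · rw [hz t (by omega), if_neg h0]
        · rintro rfl
          refine ⟨⟨(dkr_block hn0).mpr hcond.1, ?_⟩, ?_⟩
          · rw [charge_all_lt (j := n) hn0 le_rfl (fun h => by simp)
              (fun i h1 h2 => by simp only [if_neg (by omega : ¬ (i : ℕ) = 0)])]
            rw [hcond.2]
          · rcases secondOne_cases
              (x := fun t : Fin n => if (t : ℕ) = 0 then 1 else 0) with h | h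
            · exact h
            · exfalso
              obtain ⟨hpos, hx1, -⟩ := secondOne_spec rfl h
              simp only [Fin.val_mk] at hx1
              have hne0 : ¬ (secondOne n (fun t : Fin n => if (t : ℕ) = 0 then 1 else 0)) = 0 :=
                by omega
              rw [if_neg hne0] at hx1
              exact fin2_ne hx1
      rw [hset, Finset.card_singleton]
    · rw [if_neg hcond]
      rw [Finset.card_eq_zero, Finset.eq_empty_iff_forall_notMem]
      intro x hx
      simp only [Finset.mem_filter, mem_Aset] at hx
      obtain ⟨⟨hdkr, hch⟩, hso⟩ := hx
      have hz := secondOne_eq_self hso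
      have hxblock : x = fun t : Fin n => if (t : ℕ) = 0 then 1 else 0 := by
        funext t
        by_cases h0 : (t : ℕ) = 0
        · have ht : t = ⟨0, hn0⟩ := Fin.ext h0
          rw [ht, hdkr.1 hn0, if_pos rfl]
        · rw [hz t (by omega), if_neg h0]
      apply hcond
      constructor
      · rw [hxblock] at hdkr
        exact (dkr_block hn0).mp hdkr
      · rw [← hch]
        rw [charge_all_lt (j := n) hn0 le_rfl hdkr.1 (fun i h1 h2 => hz i h1)]
  · refine Finset.sum_congr rfl ?_
    intro j hj
    simp only [Finset.mem_Icc, le_min_iff] at hj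
    have hjd : d + 1 ≤ j := hj.1
    have hjn : j ≤ n - 1 := hj.2.1
    have hjk : j ≤ k + 1 := hj.2.2
    have hjlt : j < n := by omega
    have hj1 : 0 < j := by omega
    rw [Acard_eq]
    refine Finset.card_bij (fun x _ => tl n j x) ?_ ?_ ?_
    · intro x hx
      simp only [Finset.mem_filter, mem_Aset] at hx
      obtain ⟨⟨hdkr, hch⟩, hso⟩ := hx
      obtain ⟨hpos, hx1, hzz⟩ := secondOne_spec hso hjlt
      rw [mem_Aset]
      constructor
      · exact ((dkr_split hj1 hjlt hdkr.1 hzz hx1).mp hdkr).2.2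
      · have hcs := charge_split hj1 hjlt hdkr.1 hzz
        rw [hch] at hcs
        show nrziCharge (n - j) (tl n j x) = -σ - (j : ℤ)
        omega
    · intro x1 hx1 x2 hx2 heq
      simp only [Finset.mem_filter, mem_Aset] at hx1 hx2
      obtain ⟨⟨hdkr1, -⟩, hso1⟩ := hx1
      obtain ⟨⟨hdkr2, -⟩, hso2⟩ := hx2
      obtain ⟨-, -, hzz1⟩ := secondOne_spec hso1 hjlt
      obtain ⟨-, -, hzz2⟩ := secondOne_spec hso2 hjlt
      funext t
      by_cases htj : (t : ℕ) < j
      · by_cases h0 : (t : ℕ) = 0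
        · have ht : t = ⟨0, hn0⟩ := Fin.ext h0
          rw [ht, hdkr1.1 hn0, hdkr2.1 hn0]
        · rw [hzz1 t (by omega) htj, hzz2 t (by omega) htj]
      · have htlt := t.isLt
        have e : t = (⟨j + ((t : ℕ) - j), by omega⟩ : Fin n) := Fin.ext (by simp; omega)
        rw [e]
        exact congrFun heq ⟨(t : ℕ) - j, by omega⟩
    · intro y hy
      rw [mem_Aset] at hy
      obtain ⟨hydkr, hych⟩ := hy
      have hnj : 0 < n - j := by omega
      have hx1 : consBlock n j y ⟨j, hjlt⟩ = 1 := by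
        rw [consBlock, dif_neg (by simp)]
        have := hydkr.1 hnj
        convert this using 2
        simp
      have hz : ∀ t : Fin n, 0 < (t : ℕ) → (t : ℕ) < j → consBlock n j y t = 0 :=
        fun t h1 h2 => consBlock_lt y t h1 h2
      have h0 : ∀ h : 0 < n, consBlock n j y ⟨0, h⟩ = 1 := fun h => consBlock_zero hj1 h y
      refine ⟨consBlock n j y, ?_, tl_consBlock y⟩
      simp only [Finset.mem_filter, mem_Aset]
      refine ⟨⟨?_, ?_⟩, ?_⟩
      · rw [dkr_split hj1 hjlt h0 hz hx1]
        refine ⟨hjd, hjk, ?_⟩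
        rw [tl_consBlock y]
        exact hydkr
      · rw [charge_split hj1 hjlt h0 hz, tl_consBlock y, hych]
        ring
      · exact secondOne_eq hjlt hj1 hx1 hz

end mainproof
end

section
/- Let x ∈ {0,1}^ñ with x_1 = 1, z its NRZI encoding from state 1, ω = exp(2πi/n), and suppose x = (1,0^{j-1}) ⧺ x' where x' has length ñ-j and x'_1 = 1 with NRZI encoding z' (from state 1). Then for every m, the m-th exponential sums satisfy σ_m(z) = σ̃_{j,m} + (-1)·ω^{-mj}·σ_m(z'), where σ̃_{j,m} = -∑_{t=0}^{j-1} ω^{-mt}. In particular σ_m(z') is uniquely determined by σ_m(z) and j. -/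
open Complex Finset

/-- Decomposition of the m-th exponential sum of an NRZI encoding across a prefix block
`(1, 0^{j-1})`, together with the uniqueness of the suffix sum. -/
theorem exponential_sum_prefix_decomposition
    (n m nt j : ℕ) (hn : 1 ≤ n) (hnt : nt ≤ n) (hj : 1 ≤ j) (hjnt : j ≤ nt)
    (ω : ℂ) (hω : ω = Complex.exp (2 * Real.pi * Complex.I / n))
    (x x' : ℕ → ℕ) (hx : ∀ t, x t ≤ 1) (hx1 : x 1 = 1)
    (hblock : ∀ t, 2 ≤ t → t ≤ j → x t = 0)
    (hsuffix : ∀ t, x' t = x (t + j)) (hx'1 : x' 1 = 1)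
    (z z' : ℕ → ℤ) (hz0 : z 0 = 1) (hz'0 : z' 0 = 1)
    (hz : ∀ t, 1 ≤ t → z t = if x t = 0 then z (t - 1) else -z (t - 1))
    (hz' : ∀ t, 1 ≤ t → z' t = if x' t = 0 then z' (t - 1) else -z' (t - 1))
    (σz σz' σtilde : ℂ)
    (hσz : σz = ∑ t ∈ Finset.range nt, (z (t + 1) : ℂ) * ω ^ (-(m * t : ℤ)))
    (hσz' : σz' = ∑ t ∈ Finset.range (nt - j), (z' (t + 1) : ℂ) * ω ^ (-(m * t : ℤ)))
    (hσtilde : σtilde = -(∑ t ∈ Finset.range j, ω ^ (-(m * t : ℤ)))) :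
    σz = σtilde + (-1) * ω ^ (-(m * j : ℤ)) * σz' ∧
    ∀ s s' : ℂ, σz = σtilde + (-1) * ω ^ (-(m * j : ℤ)) * s →
      σz = σtilde + (-1) * ω ^ (-(m * j : ℤ)) * s' → s = s' := by
  have hω0 : ω ≠ 0 := by rw [hω]; exact Complex.exp_ne_zero _
  -- z t = -1 on the block
  have hzneg : ∀ t, 1 ≤ t → t ≤ j → z t = -1 := by
    intro t
    induction t with
    | zero => omega
    | succ k ih =>
      intro _ hk
      rcases Nat.eq_zero_or_pos k with hk0 | hk1
      · subst hk0
        rw [hz 1 le_rfl, hx1]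
        simp [hz0]
      · have hxk : x (k + 1) = 0 := hblock _ (by omega) hk
        rw [hz (k + 1) (by omega), hxk]
        simpa using ih hk1 (by omega)
  -- shift relation
  have hshift : ∀ t, z (t + j) = - z' t := by
    intro t
    induction t with
    | zero => simpa [hz'0] using hzneg j hj le_rfl
    | succ k ih =>
      have h1 : z (k + 1 + j) = if x (k + 1 + j) = 0 then z (k + j) else -z (k + j) := by
        have := hz (k + 1 + j) (by omega)
        simpa [Nat.add_sub_cancel, show k + 1 + j - 1 = k + j by omega] using this
      have h2 : z' (k + 1) = if x' (k + 1) = 0 then z' k else -z' k := by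
        simpa using hz' (k + 1) (by omega)
      rw [h1, h2, ih, hsuffix (k + 1)]
      split <;> ring
  obtain ⟨N, hN⟩ : ∃ N, nt = j + N := ⟨nt - j, by omega⟩
  subst hN
  have hNj : j + N - j = N := by omega
  have key : σz = σtilde + (-1) * ω ^ (-(m * j : ℤ)) * σz' := by
    rw [hσz, hσtilde, hσz', hNj, Finset.sum_range_add]
    congr 1
    · rw [← Finset.sum_neg_distrib]
      refine Finset.sum_congr rfl fun t ht => ?_
      have := hzneg (t + 1) (by omega) (by simp at ht; omega)
      rw [this]; push_cast; ring
    · rw [Finset.mul_sum]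
      refine Finset.sum_congr rfl fun t ht => ?_
      have hzz : z (j + t + 1) = - z' (t + 1) := by
        have := hshift (t + 1)
        simpa [show t + 1 + j = j + t + 1 by omega] using this
      have hpow : ω ^ (-(m * (j + t) : ℤ)) = ω ^ (-(m * j : ℤ)) * ω ^ (-(m * t : ℤ)) := by
        rw [← zpow_add₀ hω0]; ring_nf
      rw [hzz]
      push_cast
      rw [hpow]
      ring
  refine ⟨key, fun s s' h1 h2 => ?_⟩
  have h3 : (-1) * ω ^ (-(m * j : ℤ)) * s = (-1) * ω ^ (-(m * j : ℤ)) * s' := by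
    have := h1.symm.trans h2
    linear_combination this
  have hne : (-1 : ℂ) * ω ^ (-(m * j : ℤ)) ≠ 0 := by
    simp [zpow_ne_zero, hω0]
  exact mul_left_cancel₀ hne h3
end

section
/- Let S be a finite set of binary sequences of length ñ ordered lexicographically, and for a prefix p = (x_1,…,x_{j-1},0) let W(p) = |{y ∈ S : y has prefix p}|. Then for any x ∈ S, its lexicographic index N(x) = |{y ∈ S : y < x}| equals ∑_{j=1}^{ñ} x_j · W(x_1,…,x_{j-1},0). -/
open Finset

/-- `y` strictly precedes `x` in lexicographic order on `{0,1}^nt`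
(coordinates compared left to right, `0 < 1`). -/
def LexLt (nt : ℕ) (y x : Fin nt → Fin 2) : Prop :=
  ∃ j : Fin nt, (y j : ℕ) < (x j : ℕ) ∧ ∀ i : Fin nt, i < j → y i = x i

instance (nt : ℕ) (y x : Fin nt → Fin 2) : Decidable (LexLt nt y x) := by
  unfold LexLt; infer_instance

/-- Cover's enumerative formula: the lexicographic index of `x` in `S` equals
`∑_j x_j · W(x_1,…,x_{j-1},0)`, where `W(p)` counts the elements of `S`
with prefix `p`. -/
theorem cover_lexicographic_index
    (nt : ℕ) (S : Finset (Fin nt → Fin 2)) (x : Fin nt → Fin 2) (hx : x ∈ S) :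
    (S.filter (fun y => LexLt nt y x)).card
      = ∑ j : Fin nt, (x j : ℕ) *
          (S.filter (fun y => (∀ i : Fin nt, i < j → y i = x i) ∧ y j = 0)).card := by
  classical
  have key : S.filter (fun y => LexLt nt y x)
      = Finset.univ.biUnion (fun j : Fin nt =>
          S.filter (fun y => (∀ i : Fin nt, i < j → y i = x i)
            ∧ (y j : ℕ) < (x j : ℕ))) := by
    ext y
    rw [mem_filter]
    simp only [mem_filter, mem_biUnion, mem_univ, true_and, LexLt]
    tauto
  rw [key, Finset.card_biUnion]
  · refine Finset.sum_congr rfl fun j _ => ?_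
    have hxj : (x j : ℕ) = 0 ∨ (x j : ℕ) = 1 := by omega
    rcases hxj with h | h
    · rw [h, zero_mul]
      convert Finset.card_empty
      rw [Finset.filter_eq_empty_iff]
      intro y _ hy
      omega
    · rw [h, one_mul]
      congr 1
      apply Finset.filter_congr
      intro y _
      constructor
      · rintro ⟨h1, h2⟩
        refine ⟨h1, ?_⟩
        have := (y j).is_lt
        rw [Fin.ext_iff]
        simp only [Fin.val_zero]
        omega
      · rintro ⟨h1, h2⟩
        refine ⟨h1, ?_⟩
        rw [Fin.ext_iff] at h2
        simp only [Fin.val_zero] at h2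
        omega
  · intro j _ k _ hjk
    simp only [Finset.disjoint_left, mem_filter]
    rintro y ⟨_, hj1, hj2⟩ ⟨_, hk1, hk2⟩
    rcases lt_or_gt_of_ne hjk with h | h
    · have := hk1 j h; omega
    · have := hj1 k h; omega
end
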